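/- arXiv:2004.04631 — 2 statements merged into one kernel-verified Lean document; each statement's English description precedes it below -/
import Mathlib

section
/- The Gaussian mechanism M(S) = f(S) + N(0, σ²), where f has sensitivity Δ (i.e., |f(S) − f(S′)| ≤ Δ for all adjacent S, S′), satisfies (α, αΔ²/(2σ²))-Rényi differential privacy for every α > 1. -/
open MeasureTheory Real ProbabilityTheory
open scoped NNReal

noncomputable def renyiDiv {X : Type*} [MeasurableSpace X] (μ : Measure X)
    (p q : X → ℝ) (α : ℝ) : ℝ :=
  (α - 1)⁻¹ * Real.log (∫ x, q x * (p x / q x) ^ α ∂μ)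

/-! Completing the square, `q · (p / q) ^ α` is a constant multiple of the Gaussian density
with the same variance and mean `α m - (α - 1) m'`, so the Rényi integral is that constant,
`exp (α (α - 1) (m - m')² / (2v))`. The divergence is therefore exactly `α (m - m')² / (2v)`,
and the sensitivity bound `|m - m'| ≤ Δ` finishes. -/

lemma gaussianPDFReal_div_gaussianPDFReal (m m' : ℝ) {v : ℝ≥0} (hv : v ≠ 0) (x : ℝ) :
    gaussianPDFReal m v x / gaussianPDFReal m' v x
      = exp (-(x - m) ^ 2 / (2 * v) + (x - m') ^ 2 / (2 * v)) := by
  have hs : 0 < √(2 * π * v) := sqrt_pos.mpr (by positivity)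
  rw [gaussianPDFReal, gaussianPDFReal, mul_div_mul_left _ _ (inv_ne_zero hs.ne'),
    ← exp_sub]
  congr 1
  ring

lemma gaussianPDFReal_mul_div_rpow (m m' : ℝ) {v : ℝ≥0} (hv : v ≠ 0) (α x : ℝ) :
    gaussianPDFReal m' v x * (gaussianPDFReal m v x / gaussianPDFReal m' v x) ^ α
      = exp (α * (α - 1) * (m - m') ^ 2 / (2 * v))
        * gaussianPDFReal (α * m - (α - 1) * m') v x := by
  have hv' : (v : ℝ) ≠ 0 := mod_cast hv
  have hexp : -(x - m') ^ 2 / (2 * v) + (-(x - m) ^ 2 / (2 * v) + (x - m') ^ 2 / (2 * v)) * α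
      = α * (α - 1) * (m - m') ^ 2 / (2 * v)
        + -(x - (α * m - (α - 1) * m')) ^ 2 / (2 * v) := by
    field_simp
    ring
  rw [gaussianPDFReal_div_gaussianPDFReal m m' hv, ← exp_mul]
  simp only [gaussianPDFReal]
  rw [mul_assoc, ← exp_add, hexp, exp_add]
  ring

lemma integral_gaussianPDFReal_mul_div_rpow (m m' : ℝ) {v : ℝ≥0} (hv : v ≠ 0) (α : ℝ) :
    ∫ x, gaussianPDFReal m' v x * (gaussianPDFReal m v x / gaussianPDFReal m' v x) ^ α
      = exp (α * (α - 1) * (m - m') ^ 2 / (2 * v)) := by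
  simp_rw [gaussianPDFReal_mul_div_rpow m m' hv α, integral_const_mul,
    integral_gaussianPDFReal_eq_one _ hv, mul_one]

lemma renyiDiv_gaussianPDFReal (m m' : ℝ) {v : ℝ≥0} (hv : v ≠ 0) {α : ℝ} (hα : α ≠ 1) :
    renyiDiv volume (gaussianPDFReal m v) (gaussianPDFReal m' v) α
      = α * (m - m') ^ 2 / (2 * v) := by
  have hα' : α - 1 ≠ 0 := sub_ne_zero.mpr hα
  rw [renyiDiv, integral_gaussianPDFReal_mul_div_rpow m m' hv, log_exp]
  field_simp

/-- The Gaussian mechanism `M(S) = f(S) + N(0, σ²)`, whose output distribution has density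
`gaussianPDFReal (f S) σ²`, satisfies `(α, α Δ² / (2σ²))`-RDP for every `α > 1`. -/
theorem gaussian_mechanism_rdp {S : Type*} (adjacent : S → S → Prop)
    (f : S → ℝ) (Δ σ : ℝ) (hσ : 0 < σ)
    (hsens : ∀ s s', adjacent s s' → |f s - f s'| ≤ Δ)
    (α : ℝ) (hα : 1 < α) :
    ∀ s s', adjacent s s' →
      renyiDiv (volume : Measure ℝ)
        (gaussianPDFReal (f s) (σ ^ 2).toNNReal)
        (gaussianPDFReal (f s') (σ ^ 2).toNNReal) α
        ≤ α * Δ ^ 2 / (2 * σ ^ 2) := by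
  intro s s' hadj
  have hσ2 : 0 < σ ^ 2 := by positivity
  have hv : (σ ^ 2).toNNReal ≠ 0 := (Real.toNNReal_pos.mpr hσ2).ne'
  rw [renyiDiv_gaussianPDFReal _ _ hv hα.ne', Real.coe_toNNReal _ hσ2.le]
  have hsq : (f s - f s') ^ 2 ≤ Δ ^ 2 :=
    (sq_abs _).symm.trans_le (pow_le_pow_left₀ (abs_nonneg _) (hsens s s' hadj) 2)
  gcongr
end

section
/- As α → 1, the Rényi divergence D_α(P‖Q) converges to the Kullback–Leibler divergence KL(P‖Q) = ∫ p(x) ln(p(x)/q(x)) dx, assuming D_β(P‖Q) is finite for some β > 1. -/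
open MeasureTheory Real Filter

/-- The Kullback–Leibler divergence between densities `p` and `q`. -/
noncomputable def klDiv {X : Type*} [MeasurableSpace X] (μ : Measure X)
    (p q : X → ℝ) : ℝ :=
  ∫ x, p x * Real.log (p x / q x) ∂μ

/-!
With `t = p / q` and `F α = ∫ q t^α dμ` we have `D_α(P‖Q) = log F(α) / (α - 1)` and `F 1 = 1`,
so the limit is the derivative of `log ∘ F` at `1`, namely `F'(1) = ∫ q t log t = KL(P‖Q)`.
Differentiation under the integral sign is justified by dominated convergence: near `α = 1` the
factor `t^α |log t|` is bounded for `t ≤ 1` and at most a multiple of `t^(α + δ)`, `α + δ ≤ β`,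
for `t ≥ 1`, so the derivative is dominated by a multiple of `q + q t^β`.
-/

namespace Real

lemma rpow_le_one_add_rpow {t a b : ℝ} (ht : 0 ≤ t) (ha : 0 ≤ a) (hab : a ≤ b) :
    t ^ a ≤ 1 + t ^ b := by
  rcases le_total t 1 with h | h
  · linarith [rpow_le_one ht h ha, rpow_nonneg ht b]
  · linarith [rpow_le_rpow_of_exponent_le h hab]

lemma rpow_mul_abs_log_le {t a α δ : ℝ} (ht : 0 ≤ t) (ha : 0 < a) (haα : a ≤ α)
    (hδ : 0 < δ) :
    t ^ α * |log t| ≤ a⁻¹ + δ⁻¹ * t ^ (α + δ) := by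
  rcases ht.eq_or_lt with rfl | ht
  · simp only [log_zero, abs_zero, mul_zero]
    positivity
  rcases le_total t 1 with h | h
  · calc t ^ α * |log t| ≤ t ^ a * |log t| :=
          mul_le_mul_of_nonneg_right (rpow_le_rpow_of_exponent_ge ht h haα) (abs_nonneg _)
      _ = |log t * t ^ a| := by rw [abs_mul, abs_of_pos (rpow_pos_of_pos ht a), mul_comm]
      _ ≤ a⁻¹ := by simpa using (abs_log_mul_self_rpow_lt t a ht h ha).le
      _ ≤ a⁻¹ + δ⁻¹ * t ^ (α + δ) := le_add_of_nonneg_right (by positivity)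
  · calc t ^ α * |log t| ≤ t ^ α * (t ^ δ / δ) := by
          rw [abs_of_nonneg (log_nonneg h)]
          gcongr
          exact log_le_rpow_div ht.le hδ
      _ = δ⁻¹ * t ^ (α + δ) := by rw [rpow_add ht]; ring
      _ ≤ a⁻¹ + δ⁻¹ * t ^ (α + δ) := le_add_of_nonneg_left (inv_nonneg.2 ha.le)

lemma hasDerivAt_const_rpow_of_nonneg {t α : ℝ} (ht : 0 ≤ t) (hα : 0 < α) :
    HasDerivAt (fun a => t ^ a) (t ^ α * log t) α := by
  rcases ht.eq_or_lt with rfl | ht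
  · rw [log_zero, mul_zero]
    refine (hasDerivAt_const α 0).congr_of_eventuallyEq ?_
    filter_upwards [eventually_gt_nhds hα] with a ha using zero_rpow ha.ne'
  · exact (hasStrictDerivAt_const_rpow ht α).hasDerivAt

end Real

lemma tendsto_inv_sub_one_mul_log {F : ℝ → ℝ} {d : ℝ} (hF : HasDerivAt F d 1)
    (hF1 : F 1 = 1) :
    Tendsto (fun α => (α - 1)⁻¹ * log (F α)) (nhdsWithin 1 {1}ᶜ) (nhds d) := by
  have hlogF : HasDerivAt (fun α => log (F α)) d 1 := by
    simpa [hF1] using hF.log (by rw [hF1]; exact one_ne_zero)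
  refine (hasDerivAt_iff_tendsto_slope.1 hlogF).congr fun α => ?_
  rw [slope_def_field, hF1, log_one, sub_zero, div_eq_inv_mul]

section MulRpow

variable {X : Type*} [MeasurableSpace X] {μ : Measure X} {q t : X → ℝ}

lemma integrable_mul_rpow_of_le (hq : Measurable q) (ht : Measurable t)
    (hq0 : ∀ x, 0 ≤ q x) (ht0 : ∀ x, 0 ≤ t x) (hq_int : Integrable q μ) {α β : ℝ}
    (hα : 0 ≤ α) (hαβ : α ≤ β) (hβ_int : Integrable (fun x => q x * t x ^ β) μ) :
    Integrable (fun x => q x * t x ^ α) μ := by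
  refine (hq_int.add hβ_int).mono' (hq.mul (ht.pow_const α)).aestronglyMeasurable
    (Eventually.of_forall fun x => ?_)
  rw [norm_of_nonneg (mul_nonneg (hq0 x) (rpow_nonneg (ht0 x) α))]
  calc q x * t x ^ α ≤ q x * (1 + t x ^ β) :=
        mul_le_mul_of_nonneg_left (rpow_le_one_add_rpow (ht0 x) hα hαβ) (hq0 x)
    _ = q x + q x * t x ^ β := by ring

theorem hasDerivAt_integral_mul_rpow (hq : Measurable q) (ht : Measurable t)
    (hq0 : ∀ x, 0 ≤ q x) (ht0 : ∀ x, 0 ≤ t x) (hq_int : Integrable q μ) {α₀ β : ℝ}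
    (hα₀ : 0 < α₀) (hα₀β : α₀ < β) (hβ_int : Integrable (fun x => q x * t x ^ β) μ) :
    HasDerivAt (fun α => ∫ x, q x * t x ^ α ∂μ)
      (∫ x, q x * (t x ^ α₀ * log (t x)) ∂μ) α₀ := by
  set δ := (β - α₀) / 2 with hδ
  have hδ_pos : 0 < δ := by linarith
  set bound : X → ℝ := fun x => (α₀ / 2)⁻¹ * q x + δ⁻¹ * (q x + q x * t x ^ β)
  have h_bound : ∀ x, ∀ α ∈ Set.Ioo (α₀ / 2) (α₀ + δ),
      ‖q x * (t x ^ α * log (t x))‖ ≤ bound x := by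
    intro x α ⟨hα_lo, hα_hi⟩
    rw [norm_mul, norm_mul, norm_of_nonneg (hq0 x), norm_of_nonneg (rpow_nonneg (ht0 x) α),
      norm_eq_abs]
    calc q x * (t x ^ α * |log (t x)|)
        ≤ q x * ((α₀ / 2)⁻¹ + δ⁻¹ * (1 + t x ^ β)) := by
          gcongr
          · exact hq0 x
          refine (rpow_mul_abs_log_le (ht0 x) (by linarith) hα_lo.le hδ_pos).trans ?_
          gcongr
          exact rpow_le_one_add_rpow (ht0 x) (by linarith) (by linarith)
      _ = bound x := by ring
  refine (hasDerivAt_integral_of_dominated_loc_of_deriv_le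
    (Ioo_mem_nhds (by linarith) (by linarith))
    (Eventually.of_forall fun α => (hq.mul (ht.pow_const α)).aestronglyMeasurable)
    (integrable_mul_rpow_of_le hq ht hq0 ht0 hq_int hα₀.le hα₀β.le hβ_int)
    (hq.mul ((ht.pow_const α₀).mul (measurable_log.comp ht))).aestronglyMeasurable
    (Eventually.of_forall (h_bound ·))
    ((hq_int.const_mul _).add ((hq_int.add hβ_int).const_mul _))
    (Eventually.of_forall fun x α hα => ?_)).2
  exact (Real.hasDerivAt_const_rpow_of_nonneg (ht0 x) (by linarith [hα.1])).const_mul (q x)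

end MulRpow

theorem renyiDiv_tendsto_klDiv {X : Type*} [MeasurableSpace X] (μ : Measure X)
    (p q : X → ℝ)
    (hp : Measurable p) (hq : Measurable q)
    (hp0 : ∀ x, 0 ≤ p x) (hq0 : ∀ x, 0 ≤ q x)
    (hP : ∫ x, p x ∂μ = 1) (hQ : ∫ x, q x ∂μ = 1)
    (hpq : ∀ᵐ x ∂μ, q x = 0 → p x = 0)
    (β : ℝ) (hβ : 1 < β)
    (hfin : Integrable (fun x => q x * (p x / q x) ^ β) μ) :
    Tendsto (fun α => renyiDiv μ p q α) (nhdsWithin 1 {1}ᶜ) (nhds (klDiv μ p q)) := by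
  have hq_int : Integrable q μ :=
    Integrable.of_integral_ne_zero (by rw [hQ]; exact one_ne_zero)
  have h_one : ∀ᵐ x ∂μ, q x * (p x / q x) ^ (1 : ℝ) = p x := by
    filter_upwards [hpq] with x hx
    rcases eq_or_ne (q x) 0 with h | h
    · simp [h, hx h]
    · rw [rpow_one, mul_div_cancel₀ _ h]
  have hF := hasDerivAt_integral_mul_rpow (t := fun x => p x / q x) hq (hp.div hq) hq0
    (fun x => div_nonneg (hp0 x) (hq0 x)) hq_int one_pos hβ hfin
  have hF_one : ∫ x, q x * (p x / q x) ^ (1 : ℝ) ∂μ = 1 := by rw [integral_congr_ae h_one, hP]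
  have hF_deriv : ∫ x, q x * ((p x / q x) ^ (1 : ℝ) * log (p x / q x)) ∂μ = klDiv μ p q :=
    integral_congr_ae (h_one.mono fun x hx => by dsimp only; rw [← mul_assoc, hx])
  rw [hF_deriv] at hF
  exact tendsto_inv_sub_one_mul_log hF hF_one
end
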